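/- If the generalized composition α̃ reaches level e, then G_α̃ lies in the ideal J^(e) of ℚ[[x₁,x₂,...]] generated by the fundamental quasi-symmetric functions F_α for standard compositions α admitting a factorization α = πρ with d(π) - ℓ(π) ≥ e. -/

import Mathlib

/-- Descent set of a composition (list of positive parts): partial sums. -/
def descents (l : List ℕ) : Finset ℕ :=
  (Finset.Ioo 0 l.length).image (fun k => (l.take k).sum)

/-- The fundamental quasi-symmetric function of degree `d` with descent set `D`
(variable `xᵢ` is `X (i-1)`). -/
noncomputable def Fqs (d : ℕ) (D : Finset ℕ) : MvPowerSeries ℕ ℚ :=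
  fun e => (Nat.card {j : Fin d → ℕ // Monotone j ∧
    (∀ a b : Fin d, (a : ℕ) + 1 = (b : ℕ) → (a : ℕ) + 1 ∈ D → j a < j b) ∧
    ∀ s : ℕ, e s = (Finset.univ.filter fun i => j i = s).card} : ℚ)

/-- Strip the trailing zeros of a generalized composition (finite list of parts). -/
def strip (l : List ℕ) : List ℕ := (l.reverse.dropWhile (· == 0)).reverse

/-- Fuel-driven version of the recursive definition of `G`.  After stripping trailing
zeros: if the result `ν` is a standard composition, `G = F_ν`; otherwise write
`ν = γ ++ [0] ++ τ` where `τ = a :: β` is the maximal zero-free (standard) suffix, and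
`G_{γ·0·a·β} = G_{γ·a·β} - x_{ℓ(γ)+1} · G_{γ·(a-1)·β}` (note `x_{k}` is `X (k-1)`).
The fuel (an upper bound for the stripped length, which strictly decreases) makes the
recursion structural. -/
noncomputable def Gaux : ℕ → List ℕ → MvPowerSeries ℕ ℚ
  | 0, l => Fqs (strip l).sum (descents (strip l))
  | (fuel + 1), l =>
      let l' := strip l
      if 0 ∈ l' then
        let r := l'.reverse
        let τ := (r.takeWhile (· != 0)).reverse
        let γ := ((r.dropWhile (· != 0)).tail).reverse
        Gaux fuel (γ ++ τ) -
          MvPowerSeries.X γ.length * Gaux fuel (γ ++ (τ.headI - 1) :: τ.tail)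
      else Fqs l'.sum (descents l')

/-- The function `G_{α̃}` of a generalized composition `α̃` (finite list of parts,
extended by zeros), defined recursively from fundamental quasi-symmetric functions:
`G_{0,0,…} = 1`; `G_{ν·0·0⋯} = F_ν` for `ν` standard; and
`G_{γ̃·0·a·β·0⋯} = G_{γ̃·a·β·0⋯} - x_{ℓ(γ̃)+1}·G_{γ̃·(a-1)·β·0⋯}` for `a > 0`, `β`
standard. -/
noncomputable def G (l : List ℕ) : MvPowerSeries ℕ ℚ := Gaux (strip l).length l

/-- A generalized composition (list of parts, extended by zeros) reaches level `e` if
some prefix of length `k ≥ 1` has sum at least `k + e`. -/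
def listReaches (l : List ℕ) (e : ℕ) : Prop :=
  ∃ k : ℕ, 0 < k ∧ k + e ≤ (l.take k).sum

/-- The ideal `J^(e)` of `ℚ[[x₁,x₂,…]]` generated by the fundamental quasi-symmetric
functions `F_α` for standard compositions `α` admitting a factorization `α = πρ` with
`d(π) - ℓ(π) ≥ e` (for a nonempty prefix `π`). -/
noncomputable def Jideal (e : ℕ) : Ideal (MvPowerSeries ℕ ℚ) :=
  Ideal.span {P | ∃ l : List ℕ, (∀ x ∈ l, 0 < x) ∧ listReaches l e ∧
    P = Fqs l.sum (descents l)}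

/-!
Induct along the recursion defining `G`. Both moves of the recursion, deleting a zero part
(`γ·0·a·β ↦ γ·a·β`) and merging a part `0·a` into `a - 1` (`γ·0·a·β ↦ γ·(a-1)·β`), preserve
reaching level `e`: a prefix of length `k` whose sum is at least `k + e` becomes a prefix of
length `k` or `k - 1` whose sum is smaller by at most the loss in length. So every `F_ν` at the
bottom of the recursion comes from a standard `ν` reaching level `e`, a generator of `J^(e)`,
and `J^(e)` is closed under the differences and multiples by `x_i` that build `G`.
-/

-- `strip l` is definitionally `l.rdropWhile (· == 0)`.
lemma exists_eq_strip_append (l : List ℕ) : ∃ z : List ℕ, l = strip l ++ z ∧ ∀ x ∈ z, x = 0 :=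
  ⟨l.rtakeWhile (· == 0), List.rdropWhile_append_rtakeWhile.symm,
    fun _ hx => by simpa using List.mem_rtakeWhile_imp hx⟩

lemma length_strip_le (l : List ℕ) : (strip l).length ≤ l.length := by
  obtain ⟨z, hl, -⟩ := exists_eq_strip_append l
  conv_rhs => rw [hl]
  simp

lemma getLast_strip_ne_zero {l : List ℕ} (h : strip l ≠ []) : (strip l).getLast h ≠ 0 :=
  fun h0 => List.rdropWhile_last_not (· == 0) l h (beq_iff_eq.mpr h0)

lemma exists_eq_append_zero_cons {s : List ℕ} (h0 : 0 ∈ s) (hlast : ∀ h, s.getLast h ≠ 0) :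
    ∃ γ a β, s = γ ++ 0 :: a :: β ∧ ∀ x ∈ a :: β, x ≠ 0 := by
  set τ := s.rtakeWhile (· != 0)
  have hτ : ∀ x ∈ τ, x ≠ 0 := fun _ hx => by simpa using List.mem_rtakeWhile_imp hx
  have hsplit : s.rdropWhile (· != 0) ++ τ = s := List.rdropWhile_append_rtakeWhile
  have hne : s.rdropWhile (· != 0) ≠ [] := by
    rintro hnil
    rw [hnil, List.nil_append] at hsplit
    exact hτ 0 (hsplit ▸ h0) rfl
  have hlast0 : (s.rdropWhile (· != 0)).getLast hne = 0 := by
    simpa using List.rdropWhile_last_not (· != 0) s hne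
  obtain ⟨a, β, hab⟩ : ∃ a β, τ = a :: β :=
    List.exists_cons_of_ne_nil fun hnil => by
      have hs := List.ne_nil_of_mem h0
      exact List.rtakeWhile_eq_nil_iff.mp hnil hs (by simpa using hlast hs)
  refine ⟨(s.rdropWhile (· != 0)).dropLast, a, β, ?_, hab ▸ hτ⟩
  rw [hab, ← List.dropLast_append_getLast hne, hlast0] at hsplit
  simpa using hsplit.symm

lemma Gaux_succ_of_eq_append_zero_cons {fuel : ℕ} {l γ β : List ℕ} {a : ℕ}
    (hl : strip l = γ ++ 0 :: a :: β) (hτ : ∀ x ∈ a :: β, x ≠ 0) :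
    Gaux (fuel + 1) l = Gaux fuel (γ ++ a :: β) -
      MvPowerSeries.X γ.length * Gaux fuel (γ ++ (a - 1) :: β) := by
  have hpos : ∀ x ∈ (a :: β).reverse, (x != 0) = true := fun x hx => by
    simpa using hτ x (List.mem_reverse.mp hx)
  have hrev : (strip l).reverse = (a :: β).reverse ++ 0 :: γ.reverse := by simp [hl]
  rw [Gaux, if_pos (by simp [hl])]
  simp only [hrev, List.takeWhile_append_of_pos hpos, List.dropWhile_append_of_pos hpos]
  simp

lemma Gaux_succ_of_zero_notMem {fuel : ℕ} {l : List ℕ} (h : 0 ∉ strip l) :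
    Gaux (fuel + 1) l = Fqs (strip l).sum (descents (strip l)) := by
  simp only [Gaux, if_neg h]

lemma not_listReaches_nil (e : ℕ) : ¬ listReaches [] e := by
  rintro ⟨k, hk, h⟩
  simp at h
  omega

lemma sum_take_append_of_forall_eq_zero {l z : List ℕ} (hz : ∀ x ∈ z, x = 0) (k : ℕ) :
    ((l ++ z).take k).sum = (l.take k).sum := by
  rw [List.take_append, List.sum_append,
    List.sum_eq_zero fun x hx => hz x (List.mem_of_mem_take hx), add_zero]

lemma listReaches.strip {l : List ℕ} {e : ℕ} (h : listReaches l e) : listReaches (strip l) e := by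
  obtain ⟨z, hl, hz⟩ := exists_eq_strip_append l
  obtain ⟨k, hk, hsum⟩ := h
  exact ⟨k, hk, by rwa [hl, sum_take_append_of_forall_eq_zero hz] at hsum⟩

/-- Covers both moves of the recursion for `G`: `b = a` and `b = a - 1`. -/
lemma listReaches.of_append_zero_cons {γ β : List ℕ} {a b e : ℕ} (hab : a ≤ b + 1)
    (h : listReaches (γ ++ 0 :: a :: β) e) : listReaches (γ ++ b :: β) e := by
  obtain ⟨k, hk, hsum⟩ := h
  rcases le_or_gt k γ.length with hle | hlt
  · refine ⟨k, hk, ?_⟩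
    rwa [List.take_append_of_le_length hle] at hsum ⊢
  obtain ⟨i, rfl⟩ : ∃ i, k = γ.length + (i + 1) := ⟨k - γ.length - 1, by omega⟩
  rw [List.take_length_add_append] at hsum
  cases i with
  | zero =>
    have hγ : 0 < γ.length := by
      rcases γ with _ | ⟨x, γ⟩
      · simp at hsum
      · simp
    refine ⟨γ.length, hγ, ?_⟩
    simp only [List.take_left' rfl, List.take_succ_cons, List.take_zero, List.sum_append,
      List.sum_singleton] at hsum ⊢
    omega
  | succ j =>
    refine ⟨γ.length + (j + 1), by omega, ?_⟩
    rw [List.take_length_add_append]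
    simp only [List.take_succ_cons, List.sum_append, List.sum_cons] at hsum ⊢
    omega

lemma Gaux_mem_Jideal {e : ℕ} :
    ∀ {fuel : ℕ} {l : List ℕ}, (strip l).length ≤ fuel → listReaches l e →
      Gaux fuel l ∈ Jideal e
  | 0, l, hlen, h => by
    have hnil : strip l = [] := List.eq_nil_of_length_eq_zero (Nat.le_zero.mp hlen)
    exact absurd (hnil ▸ h.strip) (not_listReaches_nil e)
  | fuel + 1, l, hlen, h => by
    by_cases h0 : 0 ∈ strip l
    · obtain ⟨γ, a, β, hl, hτ⟩ := exists_eq_append_zero_cons h0 fun _ => getLast_strip_ne_zero _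
      have hreach : listReaches (γ ++ 0 :: a :: β) e := hl ▸ h.strip
      have hshort : ∀ b, (γ ++ b :: β).length ≤ fuel := fun b => by
        simp only [hl, List.length_append, List.length_cons] at hlen ⊢
        omega
      have ih : ∀ b, a ≤ b + 1 → Gaux fuel (γ ++ b :: β) ∈ Jideal e := fun b hab =>
        Gaux_mem_Jideal ((length_strip_le _).trans (hshort b))
          (hreach.of_append_zero_cons hab)
      rw [Gaux_succ_of_eq_append_zero_cons hl hτ]
      exact sub_mem (ih a (by omega)) (Ideal.mul_mem_left _ _ (ih (a - 1) (by omega)))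
    · rw [Gaux_succ_of_zero_notMem h0]
      refine Ideal.subset_span ⟨strip l, fun x hx => ?_, h.strip, rfl⟩
      exact Nat.pos_of_ne_zero fun hx0 => h0 (hx0 ▸ hx)

/-- If the generalized composition `α̃` reaches level `e`, then `G_{α̃} ∈ J^(e)`. -/
theorem G_mem_Jideal (e : ℕ) (l : List ℕ) (h : listReaches l e) :
    G l ∈ Jideal e :=
  Gaux_mem_Jideal le_rfl h
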